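/- Let δ > 0 and let (C_n) be a sequence of complex numbers such that for every real t with 0 < t < δ the sequence C_n * sin(n t) tends to 0 as n → ∞. Then C_n → 0. -/

import Mathlib

/-!
If `C n` does not tend to `0`, then `ε ≤ ‖C (φ k)‖` along a subsequence, so `sin (φ k * t) → 0`
for every `t ∈ (0, δ)`. By dominated convergence `∫ t in 0..δ, sin (φ k * t) ^ 2 → 0`, whereas
this integral equals `δ / 2 - sin (φ k * δ) * cos (φ k * δ) / (2 * φ k) → δ / 2`.
-/

open Filter Topology Set Real MeasureTheory

theorem tendsto_zero_of_tendsto_mul_of_le_norm {ι 𝕜 : Type*} [NormedField 𝕜] {l : Filter ι}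
    {c x : ι → 𝕜} {ε : ℝ} (hε : 0 < ε) (hc : ∀ i, ε ≤ ‖c i‖)
    (h : Tendsto (fun i => c i * x i) l (𝓝 0)) : Tendsto x l (𝓝 0) := by
  have hdiv : Tendsto (fun i => ‖c i * x i‖ / ε) l (𝓝 0) := by simpa using h.norm.div_const ε
  refine squeeze_zero_norm (fun i => ?_) hdiv
  rw [norm_mul, le_div_iff₀ hε, mul_comm]
  exact mul_le_mul_of_nonneg_right (hc i) (norm_nonneg _)

theorem integral_sin_mul_sq {n : ℝ} (hn : n ≠ 0) (a : ℝ) :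
    ∫ t in 0..a, sin (n * t) ^ 2 = a / 2 - sin (n * a) * cos (n * a) / (2 * n) := by
  rw [intervalIntegral.integral_comp_mul_left (fun u => sin u ^ 2) hn, integral_sin_sq]
  simp only [mul_zero, sin_zero, cos_zero, smul_eq_mul]
  field_simp
  ring

section
variable {ι : Type*} {l : Filter ι} {u : ι → ℝ} {a : ℝ}

theorem tendsto_integral_sin_mul_sq (hu : Tendsto u l atTop) :
    Tendsto (fun i => ∫ t in 0..a, sin (u i * t) ^ 2) l (𝓝 (a / 2)) := by
  have hpos : ∀ᶠ i in l, 0 < u i := hu.eventually_gt_atTop 0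
  have herr : Tendsto (fun i => sin (u i * a) * cos (u i * a) / (2 * u i)) l (𝓝 0) := by
    have hinv : Tendsto (fun i => (2 * u i)⁻¹) l (𝓝 0) :=
      tendsto_inv_atTop_zero.comp (hu.const_mul_atTop two_pos)
    refine squeeze_zero_norm' ?_ hinv
    filter_upwards [hpos] with i hi
    rw [norm_div, norm_mul, Real.norm_of_nonneg (by positivity : (0 : ℝ) ≤ 2 * u i),
      div_eq_mul_inv]
    exact mul_le_of_le_one_left (by positivity)
      (mul_le_one₀ (abs_sin_le_one _) (abs_nonneg _) (abs_cos_le_one _))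
  refine Tendsto.congr' ?_ (by simpa using (tendsto_const_nhds (x := a / 2)).sub herr)
  filter_upwards [hpos] with i hi
  exact (integral_sin_mul_sq hi.ne' a).symm

theorem tendsto_integral_sin_mul_sq_zero [l.IsCountablyGenerated] (ha : 0 ≤ a)
    (h : ∀ t ∈ Ioo 0 a, Tendsto (fun i => sin (u i * t)) l (𝓝 0)) :
    Tendsto (fun i => ∫ t in 0..a, sin (u i * t) ^ 2) l (𝓝 0) := by
  have := intervalIntegral.tendsto_integral_filter_of_dominated_convergence (μ := volume)
    (l := l) (a := 0) (b := a) (F := fun i t => sin (u i * t) ^ 2) (f := fun _ => 0)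
    (fun _ => 1)
    (.of_forall fun i =>
      (by fun_prop : Continuous fun t => sin (u i * t) ^ 2).aestronglyMeasurable)
    (.of_forall fun i => .of_forall fun t _ => by simpa using sin_sq_le_one (u i * t))
    intervalIntegrable_const ?_
  · simpa using this
  filter_upwards [Measure.ae_ne volume a] with t hta ht
  rw [uIoc_of_le ha] at ht
  simpa using (h t ⟨ht.1, lt_of_le_of_ne ht.2 hta⟩).pow 2

theorem not_forall_tendsto_sin_mul_zero [l.NeBot] [l.IsCountablyGenerated] (ha : 0 < a)
    (hu : Tendsto u l atTop) :
    ¬ ∀ t ∈ Ioo 0 a, Tendsto (fun i => sin (u i * t)) l (𝓝 0) := fun h => by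
  have := tendsto_nhds_unique (tendsto_integral_sin_mul_sq hu)
    (tendsto_integral_sin_mul_sq_zero ha.le h)
  linarith

end

theorem lemmaB (δ : ℝ) (hδ : 0 < δ) (C : ℕ → ℂ)
    (h : ∀ t : ℝ, 0 < t → t < δ →
      Tendsto (fun n : ℕ => C n * (Real.sin (n * t) : ℂ)) atTop (𝓝 0)) :
    Tendsto C atTop (𝓝 0) := by
  by_contra hC
  obtain ⟨ε, hε, hfreq⟩ : ∃ ε > 0, ∃ᶠ n in atTop, ε ≤ ‖C n‖ := by
    simpa [Metric.nhds_basis_ball.tendsto_right_iff, frequently_atTop] using hC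
  obtain ⟨φ, hφ, hCφ⟩ := extraction_of_frequently_atTop hfreq
  refine not_forall_tendsto_sin_mul_zero hδ
    (tendsto_natCast_atTop_atTop.comp hφ.tendsto_atTop) fun t ht => ?_
  exact tendsto_ofReal_iff.mp <| tendsto_zero_of_tendsto_mul_of_le_norm hε hCφ <|
    (h t ht.1 ht.2).comp hφ.tendsto_atTop
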